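/- Let G be a finite connected simple graph, let R be a request set on G, let D be a dispersal satisfying R, and let {u,v} ∈ R be a request that is not well-satisfied by D but such that every other request in R having u as an endpoint is well-satisfied by D. Then there exists a dispersal D' satisfying R with c(D') = c(D) such that every request well-satisfied by D is well-satisfied by D' and, in addition, the request {u,v} is well-satisfied by D'. -/

import Mathlib

open SimpleGraph Finset

/-- A dispersal `D` of `G` satisfies a request set `R` if for every request `{u,v} ∈ R`
there is a walk from `u` to `v` all of whose edges lie in `D u ∪ D v`. -/
def Satisfies {V : Type*} (G : SimpleGraph V) (D : V → Finset (Sym2 V))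
    (R : Set (Sym2 V)) : Prop :=
  ∀ u v : V, s(u, v) ∈ R → ∃ p : G.Walk u v, ∀ e ∈ p.edges, e ∈ D u ∨ e ∈ D v

/-- `D` is a dispersal of `G`: every assigned edge is an edge of `G`. -/
def IsDispersal {V : Type*} (G : SimpleGraph V) (D : V → Finset (Sym2 V)) : Prop :=
  ∀ v : V, ∀ e ∈ D v, e ∈ G.edgeSet

/-- The cost of a dispersal. -/
def cost {V : Type*} [Fintype V] (D : V → Finset (Sym2 V)) : ℕ :=
  ∑ v, (D v).card

/-- An edge set `S` connects a terminal set `T` if any two vertices of `T` are joined by a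
walk in `G` using only edges of `S`. -/
def Connects {V : Type*} (G : SimpleGraph V) (S : Finset (Sym2 V)) (T : Finset V) : Prop :=
  ∀ a ∈ T, ∀ b ∈ T, ∃ p : G.Walk a b, ∀ e ∈ p.edges, e ∈ S

/-- The star request set with center `vr` and leaf set `T \ {vr}`. -/
def starR {V : Type*} (vr : V) (T : Finset V) : Set (Sym2 V) :=
  {e | ∃ u ∈ T, u ≠ vr ∧ e = s(vr, u)}

/-- `D` well-satisfies the request `{u,v}`: there is a connecting point `α` such that some
walk from `u` to `α` has all its edges in `D u` and some walk from `α` to `v` has all its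
edges in `D v`. -/
def WellSat {V : Type*} (G : SimpleGraph V) (D : V → Finset (Sym2 V)) (u v : V) : Prop :=
  ∃ α : V, (∃ p : G.Walk u α, ∀ e ∈ p.edges, e ∈ D u) ∧
    (∃ q : G.Walk α v, ∀ e ∈ q.edges, e ∈ D v)

/-!
Let `A` be the set of vertices reachable from `u` through `D u`. Following a `D u ∪ D v`-walk
from `v` towards `u` up to its first vertex `x ∈ A`, every edge used that lies in `D u \ D v`
has an endpoint outside `A`. Moving all edges of `D u \ D v` with an endpoint outside `A` from
`D u` to `D v` keeps the cost, makes `{u,v}` well-satisfied through `x`, and does not touch the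
edges of `D u` inside the component of `u`, which are the only ones a `D u`-walk from `u` uses.
-/

namespace SimpleGraph

variable {V : Type*} {G : SimpleGraph V}

def ReachableWithin (G : SimpleGraph V) (S : Set (Sym2 V)) (a b : V) : Prop :=
  ∃ p : G.Walk a b, ∀ e ∈ p.edges, e ∈ S

namespace ReachableWithin

variable {S T : Set (Sym2 V)} {a b c : V}

theorem refl (a : V) : G.ReachableWithin S a a :=
  ⟨.nil, by simp⟩

theorem single (h : G.Adj a b) (hS : s(a, b) ∈ S) : G.ReachableWithin S a b :=
  ⟨.cons h .nil, by simpa using hS⟩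

theorem symm (h : G.ReachableWithin S a b) : G.ReachableWithin S b a := by
  obtain ⟨p, hp⟩ := h
  exact ⟨p.reverse, fun e he => hp e (by simpa using he)⟩

theorem trans (hab : G.ReachableWithin S a b) (hbc : G.ReachableWithin S b c) :
    G.ReachableWithin S a c := by
  obtain ⟨p, hp⟩ := hab
  obtain ⟨q, hq⟩ := hbc
  refine ⟨p.append q, fun e he => ?_⟩
  rw [Walk.edges_append, List.mem_append] at he
  exact he.elim (hp e) (hq e)

theorem mono (hST : S ⊆ T) (h : G.ReachableWithin S a b) : G.ReachableWithin T a b := by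
  obtain ⟨p, hp⟩ := h
  exact ⟨p, fun e he => hST (hp e he)⟩

theorem of_mem_edges {p : G.Walk a b} (hp : ∀ e ∈ p.edges, e ∈ S) {e : Sym2 V}
    (he : e ∈ p.edges) {z : V} (hz : z ∈ e) : G.ReachableWithin S a z := by
  classical
  have hzp := Walk.mem_support_of_mem_edges he hz
  exact ⟨p.takeUntil z hzp, fun e' he' => hp e' (p.edges_takeUntil_subset_edges hzp he')⟩

theorem mono_of_component (hST : ∀ e ∈ S, (∀ z ∈ e, G.ReachableWithin S a z) → e ∈ T)
    (h : G.ReachableWithin S a b) : G.ReachableWithin T a b := by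
  obtain ⟨p, hp⟩ := h
  exact ⟨p, fun e he => hST e (hp e he) fun _ hz => of_mem_edges hp he hz⟩

theorem exists_first_mem {A : Set V} (h : G.ReachableWithin S a b) (hb : b ∈ A) :
    ∃ x ∈ A, G.ReachableWithin {e | e ∈ S ∧ ∃ y ∈ e, y ∉ A} a x := by
  obtain ⟨p, hp⟩ := h
  induction p with
  | nil => exact ⟨_, hb, refl _⟩
  | @cons a a' b hadj t ih =>
    by_cases ha : a ∈ A
    · exact ⟨a, ha, refl _⟩
    obtain ⟨x, hx, hrest⟩ := ih hb fun e he => hp e (List.mem_cons_of_mem _ he)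
    have hfirst : s(a, a') ∈ {e | e ∈ S ∧ ∃ y ∈ e, y ∉ A} :=
      ⟨hp _ List.mem_cons_self, a, Sym2.mem_mk_left a a', ha⟩
    exact ⟨x, hx, (single hadj hfirst).trans hrest⟩

end ReachableWithin

end SimpleGraph

section WellSat

variable {V : Type*} {G : SimpleGraph V} {D : V → Finset (Sym2 V)} {a b : V}

theorem wellSat_iff : WellSat G D a b ↔
    ∃ α, G.ReachableWithin (D a : Set (Sym2 V)) a α ∧
      G.ReachableWithin (D b : Set (Sym2 V)) α b :=
  Iff.rfl

theorem WellSat.symm (h : WellSat G D a b) : WellSat G D b a := by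
  obtain ⟨α, hα, hαb⟩ := wellSat_iff.1 h
  exact wellSat_iff.2 ⟨α, hαb.symm, hα.symm⟩

theorem WellSat.reachableWithin (h : WellSat G D a b) :
    G.ReachableWithin {e | e ∈ D a ∨ e ∈ D b} a b := by
  obtain ⟨α, hα, hαb⟩ := wellSat_iff.1 h
  exact (hα.mono fun _ => Or.inl).trans (hαb.mono fun _ => Or.inr)

theorem WellSat.of_reachableWithin {D' : V → Finset (Sym2 V)}
    (hD : ∀ w y, G.ReachableWithin (D w : Set (Sym2 V)) w y → G.ReachableWithin (D' w) w y)
    (h : WellSat G D a b) : WellSat G D' a b := by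
  obtain ⟨α, hα, hαb⟩ := wellSat_iff.1 h
  exact wellSat_iff.2 ⟨α, hD a α hα, (hD b α hαb.symm).symm⟩

theorem Satisfies.of_wellSat_at {R : Set (Sym2 V)} {D' : V → Finset (Sym2 V)} {u : V}
    (hsat : Satisfies G D R) (hsub : ∀ w, w ≠ u → D w ⊆ D' w)
    (hu : ∀ w, s(u, w) ∈ R → WellSat G D' u w) : Satisfies G D' R := by
  intro a b hab
  by_cases ha : a = u
  · subst ha
    exact (hu b hab).reachableWithin
  by_cases hb : b = u
  · subst hb
    exact (hu a (Sym2.eq_swap ▸ hab)).symm.reachableWithin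
  obtain ⟨p, hp⟩ := hsat a b hab
  exact ⟨p, fun e he => (hp e he).imp (hsub a ha ·) (hsub b hb ·)⟩

end WellSat

section MoveEdges

variable {V : Type*} [DecidableEq V] (D : V → Finset (Sym2 V)) (u v : V) (S : Finset (Sym2 V))

def moveEdges : V → Finset (Sym2 V) :=
  Function.update (Function.update D u (D u \ S)) v (D v ∪ S)

theorem cost_update [Fintype V] (w : V) (X : Finset (Sym2 V)) :
    cost (Function.update D w X) + (D w).card = cost D + X.card := by
  unfold cost
  rw [← add_sum_erase _ (fun x => (Function.update D w X x).card) (mem_univ w),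
    ← add_sum_erase _ (fun x => (D x).card) (mem_univ w), Function.update_self,
    sum_congr rfl fun x hx => by rw [Function.update_of_ne (ne_of_mem_erase hx)]]
  ring

variable {D u v S}

theorem moveEdges_apply_left (huv : u ≠ v) : moveEdges D u v S u = D u \ S := by
  simp [moveEdges, huv]

theorem moveEdges_apply_right : moveEdges D u v S v = D v ∪ S := by
  simp [moveEdges]

theorem subset_moveEdges {w : V} (hw : w ≠ u) : D w ⊆ moveEdges D u v S w := by
  by_cases hwv : w = v
  · subst hwv
    rw [moveEdges_apply_right]
    exact subset_union_left
  · simp [moveEdges, hw, hwv]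

theorem moveEdges_subset (w : V) : moveEdges D u v S w ⊆ D w ∪ S := by
  by_cases hwv : w = v
  · subst hwv
    rw [moveEdges_apply_right]
  by_cases hwu : w = u
  · subst hwu
    rw [moveEdges_apply_left hwv]
    exact sdiff_subset.trans subset_union_left
  · simp [moveEdges, hwu, hwv]

theorem isDispersal_moveEdges {G : SimpleGraph V} (hD : IsDispersal G D) (hS : S ⊆ D u) :
    IsDispersal G (moveEdges D u v S) := by
  intro w e he
  rcases mem_union.1 (moveEdges_subset w he) with he | he
  exacts [hD w e he, hD u e (hS he)]

theorem cost_moveEdges [Fintype V] (huv : u ≠ v) (hS : S ⊆ D u) (hSv : Disjoint S (D v)) :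
    cost (moveEdges D u v S) = cost D := by
  have hu := cost_update D u (D u \ S)
  have hv := cost_update (Function.update D u (D u \ S)) v (D v ∪ S)
  rw [Function.update_of_ne huv.symm] at hv
  have hsdiff := card_sdiff_add_card_eq_card hS
  have hunion := card_union_of_disjoint hSv.symm
  unfold moveEdges
  omega

theorem reachableWithin_moveEdges {G : SimpleGraph V} (huv : u ≠ v)
    (hS : ∀ e ∈ S, ∃ y ∈ e, ¬ G.ReachableWithin (D u) u y) {w y : V}
    (h : G.ReachableWithin (D w) w y) : G.ReachableWithin (moveEdges D u v S w) w y := by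
  by_cases hw : w = u
  · subst hw
    rw [moveEdges_apply_left huv]
    refine h.mono_of_component fun e he hreach => ?_
    rw [coe_sdiff]
    refine ⟨he, fun heS => ?_⟩
    obtain ⟨z, hz, hnz⟩ := hS e heS
    exact hnz (hreach z hz)
  · exact h.mono (coe_subset.2 (subset_moveEdges hw))

end MoveEdges

theorem stmt9_general {V : Type*} [Fintype V] (G : SimpleGraph V)
    (R : Set (Sym2 V)) (D : V → Finset (Sym2 V))
    (hD : IsDispersal G D) (hsat : Satisfies G D R)
    (u v : V) (huv : s(u, v) ∈ R) (hnws : ¬ WellSat G D u v)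
    (hothers : ∀ w : V, s(u, w) ∈ R → s(u, w) ≠ s(u, v) → WellSat G D u w) :
    ∃ D' : V → Finset (Sym2 V), IsDispersal G D' ∧ Satisfies G D' R ∧
      cost D' = cost D ∧
      (∀ a b : V, s(a, b) ∈ R → WellSat G D a b → WellSat G D' a b) ∧
      WellSat G D' u v := by
  classical
  have hne : u ≠ v := by
    rintro rfl
    exact hnws (wellSat_iff.2 ⟨u, .refl u, .refl u⟩)
  set A : Set V := {y | G.ReachableWithin (D u) u y}
  obtain ⟨x, hxA, hvx⟩ := ReachableWithin.symm (hsat u v huv) |>.exists_first_mem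
    (A := A) (.refl u)
  set S := (D u).filter fun e => e ∉ D v ∧ ∃ y ∈ e, y ∉ A
  have hSu : S ⊆ D u := filter_subset _ _
  have hSv : Disjoint S (D v) := disjoint_left.2 fun _ he => (mem_filter.1 he).2.1
  have hkeep : ∀ w y, G.ReachableWithin (D w) w y →
      G.ReachableWithin (moveEdges D u v S w) w y := fun w y =>
    reachableWithin_moveEdges hne fun _ he => (mem_filter.1 he).2.2
  have hwell : WellSat G (moveEdges D u v S) u v := by
    refine wellSat_iff.2 ⟨x, hkeep u x hxA, ReachableWithin.symm ?_⟩
    rw [moveEdges_apply_right, coe_union]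
    refine hvx.mono fun e he => ?_
    obtain ⟨he, hout⟩ := he
    by_cases hev : e ∈ D v
    exacts [Or.inl hev, Or.inr (mem_filter.2 ⟨he.resolve_right hev, hev, hout⟩)]
  refine ⟨moveEdges D u v S, isDispersal_moveEdges hD hSu,
    hsat.of_wellSat_at (fun w hw => subset_moveEdges hw) fun w hw => ?_,
    cost_moveEdges hne hSu hSv, fun a b _ => WellSat.of_reachableWithin hkeep, hwell⟩
  by_cases hwv : s(u, w) = s(u, v)
  · rwa [Sym2.congr_right.1 hwv]
  · exact (hothers w hw hwv).of_reachableWithin hkeep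

theorem stmt9 {V : Type*} [Fintype V] (G : SimpleGraph V) (hG : G.Connected)
    (R : Set (Sym2 V)) (D : V → Finset (Sym2 V))
    (hD : IsDispersal G D) (hsat : Satisfies G D R)
    (u v : V) (huv : s(u, v) ∈ R) (hnws : ¬ WellSat G D u v)
    (hothers : ∀ w : V, s(u, w) ∈ R → s(u, w) ≠ s(u, v) → WellSat G D u w) :
    ∃ D' : V → Finset (Sym2 V), IsDispersal G D' ∧ Satisfies G D' R ∧
      cost D' = cost D ∧
      (∀ a b : V, s(a, b) ∈ R → WellSat G D a b → WellSat G D' a b) ∧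
      WellSat G D' u v :=
  stmt9_general G R D hD hsat u v huv hnws hothers
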